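/- arXiv:2405.11676 — 3 statements merged into one kernel-verified Lean document; each statement's English description precedes it below -/
import Mathlib

section
/- Assume λ_m > 0. Let x_new ∈ ℝ^p be a random vector with E[x_new] = 0 and E[x_new x_newᵀ] = Σ, let ε_new be a random scalar with mean 0 and variance σ², and suppose ε, x_new, ε_new are mutually independent; set y_new = ⟨x_new, β*⟩ + ε_new. Then the out-of-sample prediction risk satisfies E[(y_new − ⟨x_new, β̂⟩)² | X, β*] − σ² = ⟨P_m^⊥ β*, Σ P_m^⊥ β*⟩ + σ² · (1/n) · tr((P_m Σ̂ P_m)⁺ Σ). -/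
open Matrix MeasureTheory

/-- `B` satisfies the four Penrose equations for `A`, i.e. `B` is the Moore–Penrose
pseudoinverse `A⁺` of `A` (it is unique when it exists). -/
def IsMoorePenroseInverse {m n : Type*} [Fintype m] [Fintype n]
    (A : Matrix m n ℝ) (B : Matrix n m ℝ) : Prop :=
  A * B * A = A ∧ B * A * B = B ∧ (A * B)ᵀ = A * B ∧ (B * A)ᵀ = B * A

section MatrixAux

set_option linter.unusedSectionVars false

variable {q r s : Type*} [Fintype q] [Fintype r] [Fintype s]

lemma vmv_mul_vmv [DecidableEq q] (a : q → ℝ) (b c : r → ℝ) (d : s → ℝ) :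
    vecMulVec a b * vecMulVec c d = (b ⬝ᵥ c) • vecMulVec a d := by
  ext i j
  simp only [mul_apply, vecMulVec_apply, Matrix.smul_apply, smul_eq_mul, dotProduct,
    Finset.sum_mul]
  exact Finset.sum_congr rfl fun k _ => by ring

lemma vmv_mul (a : q → ℝ) (b : r → ℝ) (A : Matrix r s ℝ) :
    vecMulVec a b * A = vecMulVec a (b ᵥ* A) := by
  ext i j
  simp only [mul_apply, vecMulVec_apply, vecMul, dotProduct, Finset.mul_sum]
  exact Finset.sum_congr rfl fun k _ => by ring

lemma vmv_transpose (a : q → ℝ) (b : r → ℝ) :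
    (vecMulVec a b)ᵀ = vecMulVec b a := by
  ext i j; simp [vecMulVec_apply, mul_comm]

lemma vmv_smul_right (a : q → ℝ) (c : ℝ) (b : r → ℝ) :
    vecMulVec a (c • b) = c • vecMulVec a b := by
  ext i j; simp [vecMulVec_apply]; ring

lemma mp_unique {A : Matrix q r ℝ} {B B' : Matrix r q ℝ}
    (h : IsMoorePenroseInverse A B) (h' : IsMoorePenroseInverse A B') : B = B' := by
  obtain ⟨h1, h2, h3, h4⟩ := h
  obtain ⟨h1', h2', h3', h4'⟩ := h'
  have hAB : A * B = A * B' := by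
    calc A * B = (A * B' * A) * B := by rw [h1']
    _ = (A * B') * (A * B) := by rw [Matrix.mul_assoc (A * B') A B]
    _ = (A * B')ᵀ * (A * B)ᵀ := by rw [h3, h3']
    _ = ((A * B) * (A * B'))ᵀ := (Matrix.transpose_mul _ _).symm
    _ = ((A * B * A) * B')ᵀ := by rw [Matrix.mul_assoc (A * B) A B']
    _ = (A * B')ᵀ := by rw [h1]
    _ = A * B' := h3'
  have hBA : B * A = B' * A := by
    calc B * A = B * (A * B' * A) := by rw [h1']
    _ = (B * A) * (B' * A) := by
        rw [Matrix.mul_assoc B A (B' * A), Matrix.mul_assoc A B' A]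
    _ = (B * A)ᵀ * (B' * A)ᵀ := by rw [h4, h4']
    _ = ((B' * A) * (B * A))ᵀ := (Matrix.transpose_mul _ _).symm
    _ = (B' * (A * B * A))ᵀ := by
        rw [Matrix.mul_assoc B' A (B * A), Matrix.mul_assoc A B A]
    _ = (B' * A)ᵀ := by rw [h1]
    _ = B' * A := h4'
  calc B = B * A * B := h2.symm
  _ = B' * A * B := by rw [hBA]
  _ = B' * (A * B) := Matrix.mul_assoc _ _ _
  _ = B' * (A * B') := by rw [hAB]
  _ = B' := by rw [← Matrix.mul_assoc]; exact h2'

lemma sum_vmv_mul_sum_vmv {ι : Type*} [DecidableEq ι] [DecidableEq q] (K : Finset ι)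
    (c d t : ι → ℝ) (a : ι → q → ℝ) (b e : ι → r → ℝ) (f : ι → s → ℝ)
    (h : ∀ i ∈ K, ∀ j ∈ K, b i ⬝ᵥ e j = if i = j then t i else 0) :
    (∑ i ∈ K, c i • vecMulVec (a i) (b i)) * (∑ j ∈ K, d j • vecMulVec (e j) (f j))
      = ∑ i ∈ K, (c i * d i * t i) • vecMulVec (a i) (f i) := by
  rw [Matrix.sum_mul]
  refine Finset.sum_congr rfl fun i hi => ?_
  rw [Matrix.mul_sum]
  rw [Finset.sum_eq_single_of_mem i hi]
  · rw [Matrix.smul_mul, Matrix.mul_smul, vmv_mul_vmv, h i hi i hi, if_pos rfl,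
      smul_smul, smul_smul, mul_assoc]
  · intro j hj hji
    rw [Matrix.smul_mul, Matrix.mul_smul, vmv_mul_vmv, h i hi j hj, if_neg hji.symm]
    simp

end MatrixAux

set_option maxHeartbeats 1600000 in
/-- if `λ_m > 0`, the out-of-sample prediction risk of PCR satisfies
`E[(y_new − ⟨x_new, β̂⟩)² | X, β*] − σ² = ⟨P_m^⊥ β*, Σ P_m^⊥ β*⟩ + σ² (1/n) tr((P_m Σ̂ P_m)⁺ Σ)`,
where `x_new` has mean `0` and covariance `Σ`, `ε_new` has mean `0` and variance `σ²`,
`y_new = ⟨x_new, β*⟩ + ε_new`, and `ε, x_new, ε_new` are mutually independent. -/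
theorem pcr_out_of_sample_risk
    {n p : ℕ} (X : Matrix (Fin n) (Fin p) ℝ)
    (Shat : Matrix (Fin p) (Fin p) ℝ) (hShat : Shat = ((n : ℝ))⁻¹ • (Xᵀ * X))
    (lam : Fin p → ℝ) (u : Fin p → Fin p → ℝ)
    (horth : ∀ i j, u i ⬝ᵥ u j = if i = j then (1 : ℝ) else 0)
    (heig : ∀ i, Shat *ᵥ u i = lam i • u i)
    (hmono : ∀ i j : Fin p, i ≤ j → lam j ≤ lam i)
    (hnonneg : ∀ i, 0 ≤ lam i)
    (m : ℕ) (hm1 : 1 ≤ m) (hmp : m ≤ p)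
    (hpos : 0 < lam ⟨m - 1, by omega⟩)
    (Pm : Matrix (Fin p) (Fin p) ℝ)
    (hPm : Pm = ∑ i ∈ Finset.univ.filter (fun i : Fin p => (i : ℕ) < m),
      vecMulVec (u i) (u i))
    (B : Matrix (Fin p) (Fin n) ℝ) (hB : IsMoorePenroseInverse (Pm * Xᵀ) Bᵀ)
    (C : Matrix (Fin p) (Fin p) ℝ) (hC : IsMoorePenroseInverse (Pm * Shat * Pm) C)
    -- the population covariance
    (Sigma : Matrix (Fin p) (Fin p) ℝ) (hSigma : Sigma.PosSemidef)
    -- the randomness: noise `ε`, new covariate `x_new`, new noise `ε_new`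
    (Ω : Type*) [MeasurableSpace Ω] (μ : Measure Ω) [IsProbabilityMeasure μ]
    (ε : Ω → Fin n → ℝ) (xnew : Ω → Fin p → ℝ) (εnew : Ω → ℝ) (σ : ℝ)
    (hmeasε : Measurable ε) (hmeasx : Measurable xnew) (hmeasεnew : Measurable εnew)
    -- mutual independence of `ε`, `x_new`, `ε_new`
    (hIndep : ProbabilityTheory.iIndep
      ![MeasurableSpace.comap ε inferInstance,
        MeasurableSpace.comap xnew inferInstance,
        MeasurableSpace.comap εnew inferInstance] μ)
    -- moments of `ε`
    (hIntε1 : ∀ i, Integrable (fun ω => ε ω i) μ)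
    (hIntε2 : ∀ i j, Integrable (fun ω => ε ω i * ε ω j) μ)
    (hmeanε : ∀ i, ∫ ω, ε ω i ∂μ = 0)
    (hcovε : ∀ i j, ∫ ω, ε ω i * ε ω j ∂μ = if i = j then σ ^ 2 else 0)
    -- moments of `x_new`
    (hIntx1 : ∀ i, Integrable (fun ω => xnew ω i) μ)
    (hIntx2 : ∀ i j, Integrable (fun ω => xnew ω i * xnew ω j) μ)
    (hmeanx : ∀ i, ∫ ω, xnew ω i ∂μ = 0)
    (hcovx : ∀ i j, ∫ ω, xnew ω i * xnew ω j ∂μ = Sigma i j)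
    -- moments of `ε_new`
    (hIntεnew1 : Integrable εnew μ)
    (hIntεnew2 : Integrable (fun ω => εnew ω ^ 2) μ)
    (hmeanεnew : ∫ ω, εnew ω ∂μ = 0)
    (hvarεnew : ∫ ω, εnew ω ^ 2 ∂μ = σ ^ 2)
    (βstar : Fin p → ℝ) :
    (∫ ω, ((xnew ω ⬝ᵥ βstar + εnew ω)
        - xnew ω ⬝ᵥ (B *ᵥ (X *ᵥ βstar + ε ω))) ^ 2 ∂μ) - σ ^ 2
      = ((1 - Pm) *ᵥ βstar) ⬝ᵥ (Sigma *ᵥ ((1 - Pm) *ᵥ βstar))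
          + σ ^ 2 * (((n : ℝ))⁻¹ * (C * Sigma).trace) := by
  classical
  ------------------------------------------------------------------
  -- PART 1 : linear algebra
  ------------------------------------------------------------------
  set K : Finset (Fin p) := Finset.univ.filter (fun i : Fin p => (i : ℕ) < m) with hK
  have hlam_eq : ∀ i, lam i = u i ⬝ᵥ (Shat *ᵥ u i) := by
    intro i
    rw [heig i, dotProduct_smul, horth, if_pos rfl]
    simp
  have hn : (n : ℝ) ≠ 0 := by
    intro h0
    have hS0 : Shat = 0 := by rw [hShat, h0]; simp
    have := hlam_eq ⟨m - 1, by omega⟩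
    rw [hS0] at this
    simp [Matrix.zero_mulVec] at this
    rw [this] at hpos
    exact lt_irrefl _ hpos
  have hKmem : ∀ i : Fin p, i ∈ K ↔ (i : ℕ) < m := by
    intro i; simp [hK]
  have hKpos : ∀ i ∈ K, 0 < lam i := by
    intro i hi
    refine lt_of_lt_of_le hpos (hmono i ⟨m - 1, by omega⟩ ?_)
    rw [Fin.le_def]
    have := (hKmem i).1 hi
    simp
    omega
  have hnlam : ∀ i ∈ K, (n : ℝ) * lam i ≠ 0 := by
    intro i hi
    exact mul_ne_zero hn (ne_of_gt (hKpos i hi))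
  have hXtX : Xᵀ * X = (n : ℝ) • Shat := by
    rw [hShat, smul_smul, mul_inv_cancel₀ hn, one_smul]
  have hvX : ∀ i, (X *ᵥ u i) ᵥ* X = ((n : ℝ) * lam i) • u i := by
    intro i
    rw [← mulVec_transpose, mulVec_mulVec, hXtX, smul_mulVec, heig, smul_smul]
  have hXu : ∀ i ∈ K, ∀ j ∈ K,
      (X *ᵥ u i) ⬝ᵥ (X *ᵥ u j) = if i = j then (n : ℝ) * lam i else 0 := by
    intro i _ j _
    rw [dotProduct_mulVec, hvX, smul_dotProduct, horth, smul_eq_mul]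
    by_cases h : i = j
    · subst h; simp
    · simp [h]
  have horthK : ∀ i ∈ K, ∀ j ∈ K, u i ⬝ᵥ u j = if i = j then (1:ℝ) else 0 :=
    fun i _ j _ => horth i j
  set D : Matrix (Fin p) (Fin p) ℝ := ∑ i ∈ K, lam i • vecMulVec (u i) (u i) with hD
  set C₀ : Matrix (Fin p) (Fin p) ℝ := ∑ i ∈ K, (lam i)⁻¹ • vecMulVec (u i) (u i) with hC₀
  set B₀ : Matrix (Fin p) (Fin n) ℝ :=
    ∑ i ∈ K, ((n : ℝ) * lam i)⁻¹ • vecMulVec (u i) (X *ᵥ u i) with hB₀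
  have hPm1 : Pm = ∑ i ∈ K, (1 : ℝ) • vecMulVec (u i) (u i) := by
    rw [hPm]; simp [hK]
  have hPmT : Pmᵀ = Pm := by
    rw [hPm1, Matrix.transpose_sum]
    simp [Matrix.transpose_smul, vmv_transpose]
  have hPmPm : Pm * Pm = Pm := by
    rw [hPm1, sum_vmv_mul_sum_vmv K _ _ (fun _ => (1:ℝ)) _ _ _ _ horthK]
    simp
  have hA : Pm * Xᵀ = ∑ i ∈ K, (1 : ℝ) • vecMulVec (u i) (X *ᵥ u i) := by
    rw [hPm1, Matrix.sum_mul]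
    refine Finset.sum_congr rfl fun i hi => ?_
    rw [Matrix.smul_mul, vmv_mul, vecMul_transpose]
  have hBt : B₀ᵀ = ∑ i ∈ K, ((n : ℝ) * lam i)⁻¹ • vecMulVec (X *ᵥ u i) (u i) := by
    rw [hB₀, Matrix.transpose_sum]
    simp [Matrix.transpose_smul, vmv_transpose]
  have hABeq : (Pm * Xᵀ) * B₀ᵀ = Pm := by
    rw [hA, hBt, sum_vmv_mul_sum_vmv K _ _ (fun i => (n:ℝ) * lam i) _ _ _ _ hXu, hPm1]
    refine Finset.sum_congr rfl fun i hi => ?_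
    rw [one_mul, inv_mul_cancel₀ (hnlam i hi)]
  have hBAeq : B₀ᵀ * (Pm * Xᵀ) = ∑ i ∈ K, ((n : ℝ) * lam i)⁻¹ •
      vecMulVec (X *ᵥ u i) (X *ᵥ u i) := by
    rw [hA, hBt, sum_vmv_mul_sum_vmv K _ _ (fun _ => (1:ℝ)) _ _ _ _ horthK]
    simp
  have hMPB : IsMoorePenroseInverse (Pm * Xᵀ) B₀ᵀ := by
    refine ⟨?_, ?_, ?_, ?_⟩
    · rw [hABeq, ← Matrix.mul_assoc, hPmPm]
    · rw [hBAeq, hBt, sum_vmv_mul_sum_vmv K _ _ (fun i => (n:ℝ) * lam i) _ _ _ _ hXu]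
      refine Finset.sum_congr rfl fun i hi => ?_
      congr 1
      have h := hnlam i hi
      field_simp
    · rw [hABeq, hPmT]
    · rw [hBAeq, Matrix.transpose_sum]
      refine Finset.sum_congr rfl fun i hi => ?_
      rw [Matrix.transpose_smul, vmv_transpose]
  have hBB₀ : B = B₀ := by
    have h1 : Bᵀ = B₀ᵀ := mp_unique hB hMPB
    have := congrArg Matrix.transpose h1
    simpa using this
  have hPS : Pm * Shat = D := by
    rw [hPm1, Matrix.sum_mul, hD]
    refine Finset.sum_congr rfl fun i hi => ?_
    rw [Matrix.smul_mul, one_smul, vmv_mul, ← mulVec_transpose]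
    have hShatT : Shatᵀ = Shat := by
      rw [hShat, Matrix.transpose_smul, Matrix.transpose_mul, Matrix.transpose_transpose]
    rw [hShatT, heig, vmv_smul_right]
  have hPSP : Pm * Shat * Pm = D := by
    rw [hPS, hD, hPm1, sum_vmv_mul_sum_vmv K _ _ (fun _ => (1:ℝ)) _ _ _ _ horthK]
    refine Finset.sum_congr rfl fun i hi => ?_
    ring_nf
  have hMPC : IsMoorePenroseInverse D C₀ := by
    have hDC : D * C₀ = Pm := by
      rw [hD, hC₀, sum_vmv_mul_sum_vmv K _ _ (fun _ => (1:ℝ)) _ _ _ _ horthK, hPm1]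
      refine Finset.sum_congr rfl fun i hi => ?_
      rw [mul_one, mul_inv_cancel₀ (ne_of_gt (hKpos i hi))]
    have hCD : C₀ * D = Pm := by
      rw [hD, hC₀, sum_vmv_mul_sum_vmv K _ _ (fun _ => (1:ℝ)) _ _ _ _ horthK, hPm1]
      refine Finset.sum_congr rfl fun i hi => ?_
      rw [mul_one, inv_mul_cancel₀ (ne_of_gt (hKpos i hi))]
    have hPD : Pm * D = D := by
      rw [hD, hPm1, sum_vmv_mul_sum_vmv K _ _ (fun _ => (1:ℝ)) _ _ _ _ horthK]
      refine Finset.sum_congr rfl fun i hi => ?_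
      ring_nf
    have hPC : Pm * C₀ = C₀ := by
      rw [hC₀, hPm1, sum_vmv_mul_sum_vmv K _ _ (fun _ => (1:ℝ)) _ _ _ _ horthK]
      refine Finset.sum_congr rfl fun i hi => ?_
      ring_nf
    refine ⟨?_, ?_, ?_, ?_⟩
    · rw [hDC, hPD]
    · rw [hCD, hPC]
    · rw [hDC, hPmT]
    · rw [hCD, hPmT]
  have hCC₀ : C = C₀ := by
    rw [hPSP] at hC
    exact mp_unique hC hMPC
  have hBX : B * X = Pm := by
    rw [hBB₀, hB₀, Matrix.sum_mul, hPm1]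
    refine Finset.sum_congr rfl fun i hi => ?_
    rw [Matrix.smul_mul, vmv_mul, hvX, vmv_smul_right, smul_smul,
      inv_mul_cancel₀ (hnlam i hi)]
  have hBBt : B * Bᵀ = (n : ℝ)⁻¹ • C := by
    rw [hBB₀, hB₀, hBt, sum_vmv_mul_sum_vmv K _ _ (fun i => (n:ℝ) * lam i) _ _ _ _ hXu,
      hCC₀, hC₀, Finset.smul_sum]
    refine Finset.sum_congr rfl fun i hi => ?_
    rw [smul_smul]
    congr 1
    have h := hnlam i hi
    have h2 := ne_of_gt (hKpos i hi)
    field_simp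
  ------------------------------------------------------------------
  -- PART 2 : independence plumbing
  ------------------------------------------------------------------
  have hIxε : ProbabilityTheory.IndepFun xnew ε μ := by
    have h := hIndep.indep (show (1 : Fin 3) ≠ 0 by decide)
    simp only [Matrix.cons_val_one, Matrix.head_cons, Matrix.cons_val_zero] at h
    exact h
  have hIxs : ProbabilityTheory.IndepFun xnew εnew μ := by
    have h := hIndep.indep (show (1 : Fin 3) ≠ 2 by decide)
    simp only [Matrix.cons_val_one, Matrix.head_cons] at h
    have h2 : (![MeasurableSpace.comap ε inferInstance,
        MeasurableSpace.comap xnew inferInstance,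
        MeasurableSpace.comap εnew inferInstance] : Fin 3 → MeasurableSpace Ω) 2
        = MeasurableSpace.comap εnew inferInstance := rfl
    rw [h2] at h
    exact h
  have hIsupε : ProbabilityTheory.Indep
      (MeasurableSpace.comap xnew inferInstance ⊔ MeasurableSpace.comap εnew inferInstance)
      (MeasurableSpace.comap ε inferInstance) μ := by
    have h_le : ∀ i, (![MeasurableSpace.comap ε inferInstance,
        MeasurableSpace.comap xnew inferInstance,
        MeasurableSpace.comap εnew inferInstance] : Fin 3 → MeasurableSpace Ω) i
        ≤ ‹MeasurableSpace Ω› := by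
      intro i
      fin_cases i
      · exact hmeasε.comap_le
      · exact hmeasx.comap_le
      · exact hmeasεnew.comap_le
    have hdisj : Disjoint ({1, 2} : Set (Fin 3)) ({0} : Set (Fin 3)) := by
      simp [Set.disjoint_left]
    have h := ProbabilityTheory.indep_iSup_of_disjoint h_le hIndep hdisj
    refine ProbabilityTheory.indep_of_indep_of_le_right
      (ProbabilityTheory.indep_of_indep_of_le_left h ?_) ?_
    · refine sup_le ?_ ?_
      · have := le_iSup₂ (f := fun (i : Fin 3) (_ : i ∈ ({1, 2} : Set (Fin 3))) =>
          (![MeasurableSpace.comap ε inferInstance,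
            MeasurableSpace.comap xnew inferInstance,
            MeasurableSpace.comap εnew inferInstance] : Fin 3 → MeasurableSpace Ω) i)
          1 (by simp)
        exact this
      · have := le_iSup₂ (f := fun (i : Fin 3) (_ : i ∈ ({1, 2} : Set (Fin 3))) =>
          (![MeasurableSpace.comap ε inferInstance,
            MeasurableSpace.comap xnew inferInstance,
            MeasurableSpace.comap εnew inferInstance] : Fin 3 → MeasurableSpace Ω) i)
          2 (by simp)
        exact this
    · exact le_iSup₂ (f := fun (i : Fin 3) (_ : i ∈ ({0} : Set (Fin 3))) =>
          (![MeasurableSpace.comap ε inferInstance,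
            MeasurableSpace.comap xnew inferInstance,
            MeasurableSpace.comap εnew inferInstance] : Fin 3 → MeasurableSpace Ω) i)
          0 (by simp)
  -- measurability of dot products
  have hmdot : ∀ {M' : MeasurableSpace Ω} {y : Ω → Fin p → ℝ},
      Measurable[M'] y → ∀ v : Fin p → ℝ, Measurable[M'] (fun ω => y ω ⬝ᵥ v) := by
    intro M' y hy v
    simp only [dotProduct]
    exact Finset.measurable_sum _ fun i _ => ((measurable_pi_apply i).comp hy).mul_const _
  have hmdot' : ∀ (b : Fin p → ℝ), Measurable (fun v : Fin p → ℝ => v ⬝ᵥ b) := by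
    intro b
    simp only [dotProduct]
    exact Finset.measurable_sum _ fun i _ => (measurable_pi_apply i).mul_const _
  -- product with a coordinate of ε integrates to zero
  have hzero : ∀ f : Ω → ℝ,
      Measurable[MeasurableSpace.comap xnew inferInstance ⊔
        MeasurableSpace.comap εnew inferInstance] f → Integrable f μ → ∀ k,
      Integrable (fun ω => f ω * ε ω k) μ ∧ ∫ ω, f ω * ε ω k ∂μ = 0 := by
    intro f hf hfi k
    have hek : Measurable[MeasurableSpace.comap ε inferInstance] (fun ω => ε ω k) :=
      (measurable_pi_apply k).comp (measurable_iff_comap_le.2 le_rfl)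
    have hind : ProbabilityTheory.IndepFun f (fun ω => ε ω k) μ :=
      ProbabilityTheory.indep_of_indep_of_le_right
        (ProbabilityTheory.indep_of_indep_of_le_left hIsupε hf.comap_le) hek.comap_le
    have hint : Integrable (fun ω => f ω * ε ω k) μ := hind.integrable_mul hfi (hIntε1 k)
    have heq : ∫ ω, f ω * ε ω k ∂μ = (∫ ω, f ω ∂μ) * ∫ ω, ε ω k ∂μ :=
      hind.integral_fun_mul_eq_mul_integral hfi.aestronglyMeasurable (hIntε1 k).aestronglyMeasurable
    rw [hmeanε k, mul_zero] at heq
    exact ⟨hint, heq⟩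
  -- product with εnew integrates to zero
  have hzero2 : ∀ f : Ω → ℝ,
      Measurable[MeasurableSpace.comap xnew inferInstance] f → Integrable f μ →
      Integrable (fun ω => f ω * εnew ω) μ ∧ ∫ ω, f ω * εnew ω ∂μ = 0 := by
    intro f hf hfi
    have hind : ProbabilityTheory.IndepFun f εnew μ :=
      ProbabilityTheory.indep_of_indep_of_le_left hIxs hf.comap_le
    have hint : Integrable (fun ω => f ω * εnew ω) μ := hind.integrable_mul hfi hIntεnew1
    have heq : ∫ ω, f ω * εnew ω ∂μ = (∫ ω, f ω ∂μ) * ∫ ω, εnew ω ∂μ :=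
      hind.integral_fun_mul_eq_mul_integral hfi.aestronglyMeasurable hIntεnew1.aestronglyMeasurable
    rw [hmeanεnew, mul_zero] at heq
    exact ⟨hint, heq⟩
  ------------------------------------------------------------------
  -- PART 3 : second moments of dot products of xnew
  ------------------------------------------------------------------
  have hsum2 : ∀ v v' : Fin p → ℝ, (fun ω => (xnew ω ⬝ᵥ v) * (xnew ω ⬝ᵥ v'))
      = fun ω => ∑ i, ∑ j, (v i * v' j) * (xnew ω i * xnew ω j) := by
    intro v v'; funext ω
    rw [dotProduct, dotProduct, Finset.sum_mul_sum]
    exact Finset.sum_congr rfl fun i _ => Finset.sum_congr rfl fun j _ => by ring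
  have hIdot2 : ∀ v v' : Fin p → ℝ,
      Integrable (fun ω => (xnew ω ⬝ᵥ v) * (xnew ω ⬝ᵥ v')) μ := by
    intro v v'; rw [hsum2]
    exact integrable_finset_sum _ fun i _ =>
      integrable_finset_sum _ fun j _ => ((hIntx2 i j).const_mul _)
  have hEdot2 : ∀ v v' : Fin p → ℝ,
      ∫ ω, (xnew ω ⬝ᵥ v) * (xnew ω ⬝ᵥ v') ∂μ = v ⬝ᵥ (Sigma *ᵥ v') := by
    intro v v'
    rw [hsum2, integral_finset_sum _ (fun i _ =>
      integrable_finset_sum _ fun j _ => ((hIntx2 i j).const_mul _))]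
    have : ∀ i : Fin p, ∫ ω, ∑ j, (v i * v' j) * (xnew ω i * xnew ω j) ∂μ
        = ∑ j, (v i * v' j) * Sigma i j := by
      intro i
      rw [integral_finset_sum _ (fun j _ => (hIntx2 i j).const_mul _)]
      refine Finset.sum_congr rfl fun j _ => ?_
      rw [integral_const_mul, hcovx]
    rw [Finset.sum_congr rfl fun i _ => this i]
    simp only [dotProduct, mulVec, Finset.mul_sum]
    refine Finset.sum_congr rfl fun i _ => Finset.sum_congr rfl fun j _ => ?_
    ring
  have hIdot1 : ∀ v : Fin p → ℝ, Integrable (fun ω => xnew ω ⬝ᵥ v) μ := by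
    intro v
    have : (fun ω => xnew ω ⬝ᵥ v) = fun ω => ∑ i, xnew ω i * v i := by
      funext ω; rw [dotProduct]
    rw [this]
    exact integrable_finset_sum _ fun i _ => (hIntx1 i).mul_const _
  ------------------------------------------------------------------
  -- PART 4 : the integral computation
  ------------------------------------------------------------------
  set w : Fin p → ℝ := (1 - Pm) *ᵥ βstar with hw
  have hhc : ∀ (a : Fin p → ℝ) (e : Fin n → ℝ),
      a ⬝ᵥ (B *ᵥ e) = ∑ k, (a ⬝ᵥ (fun i => B i k)) * e k := by
    intro a e
    simp only [dotProduct, mulVec, Finset.mul_sum, Finset.sum_mul]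
    rw [Finset.sum_comm]
    exact Finset.sum_congr rfl fun k _ => Finset.sum_congr rfl fun i _ => by ring
  set G : Ω → ℝ := fun ω => xnew ω ⬝ᵥ w + εnew ω with hG
  set H : Ω → ℝ := fun ω => xnew ω ⬝ᵥ (B *ᵥ ε ω) with hH
  have hpt : ∀ ω, (xnew ω ⬝ᵥ βstar + εnew ω) - xnew ω ⬝ᵥ (B *ᵥ (X *ᵥ βstar + ε ω))
      = G ω - H ω := by
    intro ω
    have h1 : B *ᵥ (X *ᵥ βstar + ε ω) = Pm *ᵥ βstar + B *ᵥ ε ω := by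
      rw [mulVec_add, mulVec_mulVec, hBX]
    rw [h1, dotProduct_add]
    simp only [hG, hH, hw, sub_mulVec, one_mulVec, dotProduct_sub]
    ring
  -- the G² integral
  have hGsq : (fun ω => G ω ^ 2) = fun ω => (xnew ω ⬝ᵥ w) * (xnew ω ⬝ᵥ w)
      + (2 * ((xnew ω ⬝ᵥ w) * εnew ω) + εnew ω ^ 2) := by
    funext ω; simp only [hG]; ring
  have hxw_meas : Measurable[MeasurableSpace.comap xnew inferInstance]
      (fun ω => xnew ω ⬝ᵥ w) := hmdot (measurable_iff_comap_le.2 le_rfl) w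
  have hxws := hzero2 _ hxw_meas (hIdot1 w)
  have i1 : Integrable (fun ω => (xnew ω ⬝ᵥ w) * (xnew ω ⬝ᵥ w)) μ := hIdot2 w w
  have i2 : Integrable (fun ω => 2 * ((xnew ω ⬝ᵥ w) * εnew ω)) μ := hxws.1.const_mul 2
  have i23 : Integrable (fun ω => 2 * ((xnew ω ⬝ᵥ w) * εnew ω) + εnew ω ^ 2) μ :=
    i2.add hIntεnew2
  have hIG2 : Integrable (fun ω => G ω ^ 2) μ := by
    rw [hGsq]
    exact i1.add i23
  have hEG2 : ∫ ω, G ω ^ 2 ∂μ = w ⬝ᵥ (Sigma *ᵥ w) + σ ^ 2 := by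
    rw [hGsq, integral_add i1 i23, integral_add i2 hIntεnew2, integral_const_mul, hxws.2,
      hEdot2, hvarεnew]
    ring
  -- the H² integral
  have hHsq : (fun ω => H ω ^ 2) = fun ω => ∑ k, ∑ l,
      ((xnew ω ⬝ᵥ (fun i => B i k)) * (xnew ω ⬝ᵥ (fun i => B i l))) * (ε ω k * ε ω l) := by
    funext ω
    simp only [hH]
    rw [pow_two, hhc, Finset.sum_mul_sum]
    exact Finset.sum_congr rfl fun k _ => Finset.sum_congr rfl fun l _ => by ring
  have hIndkl : ∀ k l : Fin n, ProbabilityTheory.IndepFun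
      (fun ω => (xnew ω ⬝ᵥ (fun i => B i k)) * (xnew ω ⬝ᵥ (fun i => B i l)))
      (fun ω => ε ω k * ε ω l) μ := by
    intro k l
    have h1 : Measurable fun v : Fin p → ℝ =>
        (v ⬝ᵥ (fun i => B i k)) * (v ⬝ᵥ (fun i => B i l)) := (hmdot' _).mul (hmdot' _)
    have h2 : Measurable fun v : Fin n → ℝ => v k * v l :=
      (measurable_pi_apply k).mul (measurable_pi_apply l)
    exact hIxε.comp h1 h2
  have hIkl : ∀ k l : Fin n, Integrable (fun ω =>
      ((xnew ω ⬝ᵥ (fun i => B i k)) * (xnew ω ⬝ᵥ (fun i => B i l))) * (ε ω k * ε ω l)) μ :=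
    fun k l => (hIndkl k l).integrable_mul (hIdot2 _ _) (hIntε2 k l)
  have hIH2 : Integrable (fun ω => H ω ^ 2) μ := by
    rw [hHsq]
    exact integrable_finset_sum _ fun k _ => integrable_finset_sum _ fun l _ => hIkl k l
  have hEH2 : ∫ ω, H ω ^ 2 ∂μ
      = σ ^ 2 * ∑ k, (fun i => B i k) ⬝ᵥ (Sigma *ᵥ (fun i => B i k)) := by
    rw [hHsq, integral_finset_sum _ (fun k _ => integrable_finset_sum _ fun l _ => hIkl k l)]
    have : ∀ k : Fin n, ∫ ω, ∑ l, ((xnew ω ⬝ᵥ (fun i => B i k)) *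
          (xnew ω ⬝ᵥ (fun i => B i l))) * (ε ω k * ε ω l) ∂μ
        = σ ^ 2 * ((fun i => B i k) ⬝ᵥ (Sigma *ᵥ (fun i => B i k))) := by
      intro k
      rw [integral_finset_sum _ (fun l _ => hIkl k l)]
      have hterm : ∀ l : Fin n, ∫ ω, ((xnew ω ⬝ᵥ (fun i => B i k)) *
            (xnew ω ⬝ᵥ (fun i => B i l))) * (ε ω k * ε ω l) ∂μ
          = ((fun i => B i k) ⬝ᵥ (Sigma *ᵥ (fun i => B i l))) *
            (if k = l then σ ^ 2 else 0) := by
        intro l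
        have heq : ∫ ω, ((xnew ω ⬝ᵥ (fun i => B i k)) * (xnew ω ⬝ᵥ (fun i => B i l)))
              * (ε ω k * ε ω l) ∂μ
            = (∫ ω, (xnew ω ⬝ᵥ (fun i => B i k)) * (xnew ω ⬝ᵥ (fun i => B i l)) ∂μ)
              * ∫ ω, ε ω k * ε ω l ∂μ :=
          (hIndkl k l).integral_fun_mul_eq_mul_integral (hIdot2 _ _).aestronglyMeasurable (hIntε2 k l).aestronglyMeasurable
        rw [heq, hEdot2, hcovε]
      rw [Finset.sum_congr rfl fun l _ => hterm l, Finset.sum_eq_single_of_mem k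
        (Finset.mem_univ k)]
      · rw [if_pos rfl]; ring
      · intro l _ hlk
        rw [if_neg (Ne.symm hlk), mul_zero]
    rw [Finset.sum_congr rfl fun k _ => this k, ← Finset.mul_sum]
  -- the G·H integral
  have hGH : (fun ω => G ω * H ω) = fun ω => ∑ k,
      (G ω * (xnew ω ⬝ᵥ (fun i => B i k))) * ε ω k := by
    funext ω
    simp only [hH]
    rw [hhc, Finset.mul_sum]
    exact Finset.sum_congr rfl fun k _ => by ring
  have hGk : ∀ k : Fin n,
      Integrable (fun ω => (G ω * (xnew ω ⬝ᵥ (fun i => B i k))) * ε ω k) μ ∧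
      ∫ ω, (G ω * (xnew ω ⬝ᵥ (fun i => B i k))) * ε ω k ∂μ = 0 := by
    intro k
    set M' : MeasurableSpace Ω := MeasurableSpace.comap xnew inferInstance ⊔
      MeasurableSpace.comap εnew inferInstance with hM'
    have hxM : Measurable[M'] xnew := measurable_iff_comap_le.2 le_sup_left
    have hsM : Measurable[M'] εnew := measurable_iff_comap_le.2 le_sup_right
    have hfmeas : Measurable[M'] (fun ω => G ω * (xnew ω ⬝ᵥ (fun i => B i k))) := by
      exact ((hmdot hxM w).add hsM).mul (hmdot hxM _)
    have hfint : Integrable (fun ω => G ω * (xnew ω ⬝ᵥ (fun i => B i k))) μ := by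
      have : (fun ω => G ω * (xnew ω ⬝ᵥ (fun i => B i k)))
          = fun ω => (xnew ω ⬝ᵥ w) * (xnew ω ⬝ᵥ (fun i => B i k))
            + (xnew ω ⬝ᵥ (fun i => B i k)) * εnew ω := by
        funext ω; simp only [hG]; ring
      rw [this]
      exact (hIdot2 w _).add (hzero2 _ (hmdot (measurable_iff_comap_le.2 le_rfl) _)
        (hIdot1 _)).1
    exact hzero _ hfmeas hfint k
  have hIGH : Integrable (fun ω => G ω * H ω) μ := by
    rw [hGH]
    exact integrable_finset_sum _ fun k _ => (hGk k).1
  have hEGH : ∫ ω, G ω * H ω ∂μ = 0 := by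
    rw [hGH, integral_finset_sum _ (fun k _ => (hGk k).1)]
    exact Finset.sum_eq_zero fun k _ => (hGk k).2
  -- assembling the integral
  have hsplit : ∫ ω, (G ω - H ω) ^ 2 ∂μ
      = (∫ ω, G ω ^ 2 ∂μ) + (∫ ω, H ω ^ 2 ∂μ) - 2 * ∫ ω, G ω * H ω ∂μ := by
    have e1 : Integrable (fun ω => G ω ^ 2 + H ω ^ 2) μ := hIG2.add hIH2
    have e2 : Integrable (fun ω => 2 * (G ω * H ω)) μ := hIGH.const_mul 2
    calc ∫ ω, (G ω - H ω) ^ 2 ∂μ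
        = ∫ ω, (G ω ^ 2 + H ω ^ 2) - 2 * (G ω * H ω) ∂μ :=
          integral_congr_ae (Filter.Eventually.of_forall fun ω => by ring)
      _ = (∫ ω, G ω ^ 2 + H ω ^ 2 ∂μ) - ∫ ω, 2 * (G ω * H ω) ∂μ := integral_sub e1 e2
      _ = (∫ ω, G ω ^ 2 ∂μ) + (∫ ω, H ω ^ 2 ∂μ) - 2 * ∫ ω, G ω * H ω ∂μ := by
          rw [integral_add hIG2 hIH2, integral_const_mul]
  ------------------------------------------------------------------
  -- PART 5 : the trace identity and conclusion
  ------------------------------------------------------------------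
  have hsym : ∀ i j, Sigma j i = Sigma i j := by
    intro i j
    have h := hSigma.1
    conv_lhs => rw [← h]
    simp [Matrix.conjTranspose_apply]
  have hBBt' : ∀ i j, (∑ k, B i k * B j k) = (n : ℝ)⁻¹ * C i j := by
    intro i j
    have := congrArg (fun M => M i j) hBBt
    simpa [Matrix.mul_apply, Matrix.transpose_apply, Matrix.smul_apply, smul_eq_mul]
      using this
  have htrace : ∑ k, (fun i => B i k) ⬝ᵥ (Sigma *ᵥ (fun i => B i k))
      = (n : ℝ)⁻¹ * (C * Sigma).trace := by
    have lhs_eq : ∑ k, (fun i => B i k) ⬝ᵥ (Sigma *ᵥ (fun i => B i k))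
        = ∑ i, ∑ j, Sigma i j * ∑ k, B i k * B j k := by
      simp only [dotProduct, mulVec, Finset.mul_sum, Finset.sum_mul]
      rw [Finset.sum_comm]
      refine Finset.sum_congr rfl fun i _ => ?_
      rw [Finset.sum_comm]
      refine Finset.sum_congr rfl fun j _ => ?_
      refine Finset.sum_congr rfl fun k _ => ?_
      ring
    rw [lhs_eq]
    have rhs_eq : (C * Sigma).trace = ∑ i, ∑ j, C i j * Sigma j i := by
      simp [Matrix.trace, Matrix.diag, Matrix.mul_apply]
    rw [rhs_eq, Finset.mul_sum]
    refine Finset.sum_congr rfl fun i _ => ?_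
    rw [Finset.mul_sum]
    refine Finset.sum_congr rfl fun j _ => ?_
    rw [hBBt' i j, hsym i j]
    ring
  -- final computation
  have hintegrand : (fun ω => ((xnew ω ⬝ᵥ βstar + εnew ω)
      - xnew ω ⬝ᵥ (B *ᵥ (X *ᵥ βstar + ε ω))) ^ 2) = fun ω => (G ω - H ω) ^ 2 :=
    funext fun ω => by rw [hpt ω]
  rw [hintegrand, hsplit, hEG2, hEH2, hEGH, htrace]
  ring
end

section
/- Let S, Σ ∈ ℝ^{p×p} be real symmetric positive semidefinite matrices with tr(Σ) > 0, and let z = a + bi with b > 0. Then Im(tr(Σ (S − zI)⁻¹)) = b · tr(Σ ((S − aI)² + b² I)⁻¹) ≥ b · tr(Σ) / ((‖S‖ + |a|)² + b²) > 0, and consequently, for any n ≥ 1, |1 + (1/n) tr(Σ (S − zI)⁻¹)| ≥ (b / ((‖S‖ + |a|)² + b²)) · tr(Σ)/n. -/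
open Matrix Complex
open scoped Matrix.Norms.L2Operator MatrixOrder

/-!
Write `z = a + bi` and `A = S - aI`. Since `A` is real symmetric,
`(A - biI)⁻¹ = (A + biI)(A² + b²I)⁻¹` with `A` and `(A² + b²I)⁻¹` real, so the imaginary part of
`tr(Σ(S - zI)⁻¹)` is `b tr(Σ(A² + b²I)⁻¹)`. In the Loewner order `A² ≤ ‖A‖² I ≤ (‖S‖ + |a|)² I`,
and inversion is antitone, so `(A² + b²I)⁻¹ ≥ ((‖S‖ + |a|)² + b²)⁻¹ I`; pairing with `Σ ≥ 0`
under the trace gives the bound. Finally `|1 + w/n| ≥ Im(w)/n`.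
-/

namespace Matrix

variable {n : Type*} [Fintype n]

lemma map_ofReal_mul (X Y : Matrix n n ℝ) :
    (X * Y).map ofReal = X.map ofReal * Y.map ofReal :=
  Matrix.map_mul (f := ofRealHom)

lemma im_trace_map_ofReal_add_I_smul (X Y : Matrix n n ℝ) (b : ℝ) :
    (X.map ofReal + (b * I) • Y.map ofReal).trace.im = b * Y.trace := by
  simp [trace, Finset.mul_sum]

variable [DecidableEq n]

lemma map_ofReal_sq_add_smul_one (A : Matrix n n ℝ) (c : ℝ) :
    (A ^ 2 + c • 1).map ofReal = A.map ofReal * A.map ofReal + (c : ℂ) • 1 := by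
  ext i j
  by_cases hij : i = j <;> simp [hij, sq, mul_apply]

lemma inv_map_ofReal_sub_I_smul {A : Matrix n n ℝ} {b : ℝ} (h : IsUnit (A ^ 2 + b ^ 2 • 1).det) :
    (A.map ofReal - (b * I) • 1)⁻¹ =
      (A.map ofReal + (b * I) • 1) * ((A ^ 2 + b ^ 2 • 1)⁻¹).map ofReal := by
  refine inv_eq_right_inv ?_
  have hfactor : (A.map ofReal - (b * I) • 1) * (A.map ofReal + (b * I) • 1) =
      (A ^ 2 + b ^ 2 • 1).map ofReal := by
    have hI : (b * I) * (b * I) = -((b ^ 2 : ℝ) : ℂ) := by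
      push_cast
      ring_nf
      simp
    rw [map_ofReal_sq_add_smul_one]
    simp only [sub_mul, mul_add, smul_mul, Matrix.mul_smul, one_mul, mul_one, smul_smul, hI]
    module
  rw [← Matrix.mul_assoc, hfactor, ← map_ofReal_mul, mul_nonsing_inv _ h]
  exact Matrix.map_one _ ofReal_zero ofReal_one

lemma im_trace_mul_inv_map_ofReal_sub_I_smul (Sig A : Matrix n n ℝ) {b : ℝ}
    (h : IsUnit (A ^ 2 + b ^ 2 • 1).det) :
    (Sig.map ofReal * (A.map ofReal - (b * I) • 1)⁻¹).trace.im =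
      b * (Sig * (A ^ 2 + b ^ 2 • 1)⁻¹).trace := by
  rw [inv_map_ofReal_sub_I_smul h, add_mul, smul_mul, one_mul, mul_add, Matrix.mul_smul,
    ← map_ofReal_mul, ← map_ofReal_mul, ← map_ofReal_mul]
  exact im_trace_map_ofReal_add_I_smul _ _ b

lemma l2_opNorm_one_le {𝕜 : Type*} [RCLike 𝕜] : ‖(1 : Matrix n n 𝕜)‖ ≤ 1 := by
  rw [cstar_norm_def, map_one]
  exact ContinuousLinearMap.norm_id_le

lemma norm_sub_smul_one_le {𝕜 : Type*} [RCLike 𝕜] (A : Matrix n n 𝕜) (a : 𝕜) :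
    ‖A - a • 1‖ ≤ ‖A‖ + ‖a‖ := by
  refine (norm_sub_le _ _).trans (add_le_add_right ?_ _)
  rw [norm_smul]
  exact mul_le_of_le_one_right (norm_nonneg a) l2_opNorm_one_le

lemma IsHermitian.le_smul_one_of_norm_le {A : Matrix n n ℝ} (hA : A.IsHermitian) {c : ℝ}
    (hc : ‖A‖ ≤ c) : A ≤ c • 1 := by
  cases isEmpty_or_nonempty n
  · exact le_of_eq (Subsingleton.elim _ _)
  have : NormOneClass (Matrix n n ℝ) := ⟨CStarRing.norm_one⟩
  rw [← Algebra.algebraMap_eq_smul_one]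
  exact le_algebraMap_of_spectrum_le
    (fun r hr => (Real.le_norm_self r).trans ((spectrum.norm_le_norm_of_mem hr).trans hc))
    hA.isSelfAdjoint

lemma IsHermitian.sq_le_sq_smul_one_of_norm_le {A : Matrix n n ℝ} (hA : A.IsHermitian) {c : ℝ}
    (hc : ‖A‖ ≤ c) : A ^ 2 ≤ c ^ 2 • 1 := by
  have hA2 : ‖A ^ 2‖ = ‖A‖ ^ 2 := by
    rw [sq, sq, ← CStarRing.norm_star_mul_self, star_eq_conjTranspose, hA.eq]
  exact (hA.pow 2).le_smul_one_of_norm_le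
    (hA2 ▸ pow_le_pow_left₀ (norm_nonneg A) hc 2)

lemma IsHermitian.sq_add_sq_smul_one_posDef {A : Matrix n n ℝ} (hA : A.IsHermitian) {b : ℝ}
    (hb : b ≠ 0) : (A ^ 2 + b ^ 2 • 1).PosDef := by
  have hA2 : (A ^ 2).PosSemidef := by
    simpa only [sq, hA.eq] using posSemidef_conjTranspose_mul_self A
  exact PosDef.posSemidef_add hA2 (PosDef.one.smul (sq_pos_of_ne_zero hb))

lemma PosDef.inv_smul_one_le_inv {B : Matrix n n ℝ} (hB : B.PosDef) {c : ℝ} (hc : 0 < c)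
    (hBc : B ≤ c • 1) : c⁻¹ • (1 : Matrix n n ℝ) ≤ B⁻¹ := by
  have hdet : IsUnit B.det := (isUnit_iff_isUnit_det B).1 hB.isUnit
  have hdiff : B⁻¹ - c⁻¹ • 1 = c⁻¹ • (B⁻¹ * (c • 1 - B)) := by
    rw [mul_sub, Matrix.mul_smul, mul_one, nonsing_inv_mul B hdet, smul_sub, smul_smul,
      inv_mul_cancel₀ hc.ne', one_smul]
  have hcomm : Commute B⁻¹ (c • 1 - B) :=
    ((Commute.one_right _).smul_right c).sub_right
      ((nonsing_inv_mul B hdet).trans (mul_nonsing_inv B hdet).symm)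
  rw [← sub_nonneg, hdiff]
  exact smul_nonneg (inv_nonneg.2 hc.le)
    (hcomm.mul_nonneg hB.inv.posSemidef.nonneg (sub_nonneg.2 hBc))

lemma PosSemidef.trace_mul_nonneg {A B : Matrix n n ℝ} (hA : A.PosSemidef) (hB : B.PosSemidef) :
    0 ≤ (A * B).trace := by
  have hcycle : (CFC.sqrt A * B * CFC.sqrt A).trace = (A * B).trace := by
    rw [trace_mul_cycle, CFC.sqrt_mul_sqrt_self A hA.nonneg]
  rw [← hcycle]
  refine PosSemidef.trace_nonneg ?_
  simpa only [(CFC.sqrt_nonneg A).posSemidef.isHermitian.eq] using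
    hB.mul_mul_conjTranspose_same (CFC.sqrt A)

lemma PosSemidef.smul_trace_le_trace_mul {A M : Matrix n n ℝ} (hA : A.PosSemidef) {c : ℝ}
    (hM : c • 1 ≤ M) : c * A.trace ≤ (A * M).trace := by
  have h := hA.trace_mul_nonneg (le_iff.1 hM)
  rwa [mul_sub, trace_sub, Matrix.mul_smul, mul_one, trace_smul, smul_eq_mul, sub_nonneg] at h

end Matrix

/-- for real symmetric PSD `S, Σ` with `tr(Σ) > 0` and `z = a + bi`, `b > 0`:
`Im(tr(Σ(S − zI)⁻¹)) = b tr(Σ((S − aI)² + b²I)⁻¹) ≥ b tr(Σ)/((‖S‖ + |a|)² + b²) > 0`,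
and consequently for any `n ≥ 1`,
`|1 + (1/n) tr(Σ(S − zI)⁻¹)| ≥ (b/((‖S‖ + |a|)² + b²)) · tr(Σ)/n`. -/
theorem resolvent_trace_imaginary_part_lower_bound
    {p : ℕ} (S Sig : Matrix (Fin p) (Fin p) ℝ)
    (hS : S.PosSemidef) (hSig : Sig.PosSemidef) (htr : 0 < Sig.trace)
    (z : ℂ) (hz : 0 < z.im)
    (M : Matrix (Fin p) (Fin p) ℝ)
    (hM : M = ((S - z.re • 1) ^ 2 + z.im ^ 2 • 1)⁻¹) :
    (Matrix.trace (Sig.map Complex.ofReal * (S.map Complex.ofReal - z • 1)⁻¹)).im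
        = z.im * Matrix.trace (Sig * M) ∧
    z.im * Matrix.trace (Sig * M)
        ≥ z.im * Sig.trace / ((‖S‖ + |z.re|) ^ 2 + z.im ^ 2) ∧
    0 < z.im * Sig.trace / ((‖S‖ + |z.re|) ^ 2 + z.im ^ 2) ∧
    ∀ n : ℕ, 1 ≤ n →
      ‖(1 + (n : ℂ)⁻¹ *
            Matrix.trace (Sig.map Complex.ofReal * (S.map Complex.ofReal - z • 1)⁻¹))‖
        ≥ (z.im / ((‖S‖ + |z.re|) ^ 2 + z.im ^ 2)) * (Sig.trace / (n : ℝ)) := by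
  set a := z.re
  set b := z.im
  set K := (‖S‖ + |a|) ^ 2 + b ^ 2
  have hA : (S - a • 1).IsHermitian :=
    hS.isHermitian.sub (isHermitian_one.smul (IsSelfAdjoint.all a))
  have hB := hA.sq_add_sq_smul_one_posDef hz.ne'
  have hresolvent : S.map ofReal - z • 1 = (S - a • 1).map ofReal - (b * I) • 1 := by
    ext i j
    by_cases hij : i = j <;> simp [hij, Complex.ext_iff, a, b]
  have hIm : (Sig.map ofReal * (S.map ofReal - z • 1)⁻¹).trace.im = b * (Sig * M).trace := by
    rw [hresolvent, hM]
    exact im_trace_mul_inv_map_ofReal_sub_I_smul Sig _ ((isUnit_iff_isUnit_det _).1 hB.isUnit)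
  have hK : 0 < K := by positivity
  have hBK : (S - a • 1) ^ 2 + b ^ 2 • 1 ≤ K • 1 := by
    rw [add_smul]
    exact add_le_add_left (hA.sq_le_sq_smul_one_of_norm_le (norm_sub_smul_one_le S a)) _
  have htrace : Sig.trace / K ≤ (Sig * M).trace := by
    rw [div_eq_inv_mul]
    exact hSig.smul_trace_le_trace_mul (hM ▸ hB.inv_smul_one_le_inv hK hBK)
  refine ⟨hIm, ?_, by positivity, fun n _ => ?_⟩
  · rw [ge_iff_le, mul_div_assoc]
    exact mul_le_mul_of_nonneg_left htrace hz.le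
  · calc b / K * (Sig.trace / n) = (n : ℝ)⁻¹ * (b * (Sig.trace / K)) := by ring
      _ ≤ (n : ℝ)⁻¹ * (b * (Sig * M).trace) := by gcongr
      _ = (1 + (n : ℂ)⁻¹ * (Sig.map ofReal * (S.map ofReal - z • 1)⁻¹).trace).im := by
        rw [add_im, one_im, zero_add, ← ofReal_natCast, ← ofReal_inv, im_ofReal_mul, hIm]
      _ ≤ _ := im_le_norm _
end

section
/- Let {Z_{i,j}}_{i,j ≥ 1} be an infinite array of independent real random variables such that sup_{i,j} E|Z_{i,j}|^{4+δ} ≤ C for some constants C, δ > 0, and let (p_n) be a sequence of positive integers with p_n ≤ K n for all n and some constant K > 0. Set B_n = n^{(1/2)(1+δ/8)^{-1}} and M(n) = max_{1 ≤ i ≤ p_n, 1 ≤ j ≤ n} |Z_{i,j}|. Then almost surely, M(n) ≤ B_n for all sufficiently large n. -/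
open MeasureTheory Filter
open scoped ENNReal

/-! Write `a = (1/2)(1+δ/8)⁻¹`; the point is that `a (4+δ) > 2`. For `n` in the dyadic block
`[2^ℓ, 2^(ℓ+1))` every index pair lies in the box `[1, k 2^(ℓ+1)] × [1, 2^(ℓ+1)]` (with `k ≥ K`)
and `B_n ≥ (2^ℓ)^a`. By Markov's inequality for the `(4+δ)`-th moment and a union bound over the
`4k·4^ℓ` pairs, the probability that some `|Z_{i,j}|` in the box exceeds `(2^ℓ)^a` is at most
`4kC (4 / 2^(a(4+δ)))^ℓ`, a summable geometric sequence, and Borel–Cantelli concludes. -/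

theorem ENNReal.tsum_mul_div_pow_ne_top {a b c : ℝ≥0∞} (hc : c ≠ ∞) (hab : a < b) :
    ∑' n : ℕ, c * (a ^ n / b ^ n) ≠ ∞ := by
  have hq : a / b < 1 :=
    (ENNReal.div_lt_iff (.inl (pos_of_gt hab).ne') (.inr hab.ne_top)).2 (by rwa [one_mul])
  have hpow : ∀ n : ℕ, a ^ n / b ^ n = (a / b) ^ n := fun n => by
    rw [ENNReal.div_eq_inv_mul, ENNReal.div_eq_inv_mul, mul_pow, ENNReal.inv_pow]
  simp only [hpow, ENNReal.tsum_mul_left, ENNReal.tsum_geometric]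
  exact ENNReal.mul_ne_top hc (ENNReal.inv_ne_top.2 (tsub_pos_of_lt hq).ne')

theorem ENNReal.four_lt_ofReal_two_rpow {x : ℝ} (hx : 2 < x) :
    (4 : ℝ≥0∞) < ENNReal.ofReal (2 ^ x) := by
  rw [← ENNReal.ofReal_ofNat, ENNReal.ofReal_lt_ofReal_iff (by positivity)]
  calc (4 : ℝ) = 2 ^ (2 : ℝ) := by norm_num
    _ < 2 ^ x := Real.rpow_lt_rpow_of_exponent_lt (by norm_num) hx

theorem ENNReal.natCast_mul_two_pow_mul_two_pow_mul_div (k ℓ : ℕ) (M R : ℝ≥0∞) :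
    ((k * 2 ^ (ℓ + 1) * 2 ^ (ℓ + 1) : ℕ) : ℝ≥0∞) * (M / R ^ ℓ) = 4 * k * M * (4 ^ ℓ / R ^ ℓ) := by
  rw [show (4 : ℝ≥0∞) = 2 ^ 2 by norm_num, ← pow_mul]
  push_cast
  simp only [div_eq_mul_inv]
  ring

theorem Real.pow_rpow_rpow_eq_rpow_mul_pow {x : ℝ} (hx : 0 ≤ x) (ℓ : ℕ) (a r : ℝ) :
    ((x ^ ℓ) ^ a) ^ r = (x ^ (a * r)) ^ ℓ := by
  rw [← Real.rpow_mul (by positivity), Real.rpow_pow_comm hx]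

theorem two_lt_truncationExponent_mul {δ : ℝ} (hδ : 0 < δ) :
    2 < 1 / 2 * (1 + δ / 8)⁻¹ * (4 + δ) := by
  rw [show 1 / 2 * (1 + δ / 8)⁻¹ * (4 + δ) = (4 + δ) / (2 + δ / 4) by field_simp; ring,
    lt_div_iff₀ (by positivity)]
  linarith

section

variable {Ω : Type*} [MeasurableSpace Ω] {μ : Measure Ω}

theorem measure_lt_abs_le_lintegral_rpow_div {X : Ω → ℝ} (hX : AEMeasurable X μ) {r B : ℝ}
    (hr : 0 ≤ r) (hB : 0 < B) :
    μ {ω | B < |X ω|} ≤ (∫⁻ ω, ENNReal.ofReal (|X ω| ^ r) ∂μ) / ENNReal.ofReal (B ^ r) := by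
  have hBr : 0 < B ^ r := Real.rpow_pos_of_pos hB r
  calc μ {ω | B < |X ω|}
      ≤ μ {ω | ENNReal.ofReal (B ^ r) ≤ ENNReal.ofReal (|X ω| ^ r)} :=
        measure_mono fun ω hω => ENNReal.ofReal_le_ofReal
          (Real.rpow_le_rpow hB.le (le_of_lt hω) hr)
    _ ≤ _ := meas_ge_le_lintegral_div (by fun_prop) (by simpa using hBr) ENNReal.ofReal_ne_top

theorem measure_biUnion_lt_abs_le_card_mul {ι : Type*} {X : ι → Ω → ℝ}
    (hX : ∀ i, AEMeasurable (X i) μ) {r B : ℝ} (hr : 0 ≤ r) (hB : 0 < B) {M : ℝ≥0∞}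
    (hM : ∀ i, ∫⁻ ω, ENNReal.ofReal (|X i ω| ^ r) ∂μ ≤ M) (s : Finset ι) :
    μ (⋃ i ∈ s, {ω | B < |X i ω|}) ≤ s.card * (M / ENNReal.ofReal (B ^ r)) :=
  calc μ (⋃ i ∈ s, {ω | B < |X i ω|}) ≤ ∑ i ∈ s, μ {ω | B < |X i ω|} :=
        measure_biUnion_finset_le s _
    _ ≤ s.card • (M / ENNReal.ofReal (B ^ r)) := Finset.sum_le_card_nsmul s _ _ fun i _ =>
        (measure_lt_abs_le_lintegral_rpow_div (hX i) hr hB).trans (by gcongr; exact hM i)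
    _ = s.card * (M / ENNReal.ofReal (B ^ r)) := nsmul_eq_mul _ _

theorem ae_eventually_of_tsum_ne_top_of_pow_blocks {b : ℕ} (hb : 1 < b) {P : ℕ → Ω → Prop}
    (s : ℕ → Set Ω) (hs : ∑' ℓ, μ (s ℓ) ≠ ∞)
    (hP : ∀ ℓ ω, ω ∉ s ℓ → ∀ n, b ^ ℓ ≤ n → n < b ^ (ℓ + 1) → P n ω) :
    ∀ᵐ ω ∂μ, ∀ᶠ n in atTop, P n ω := by
  filter_upwards [ae_eventually_notMem hs] with ω hω
  obtain ⟨L, hL⟩ := eventually_atTop.1 hω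
  refine eventually_atTop.2 ⟨b ^ L, fun n hn => ?_⟩
  have hn0 : n ≠ 0 := (Nat.pos_of_ne_zero (by positivity) |>.trans_le hn).ne'
  exact hP _ ω (hL _ (Nat.le_log_of_pow_le hb hn)) n (Nat.pow_log_le_self b hn0)
    (Nat.lt_pow_succ_log_self hb n)

end

theorem truncation_level_eventually_dominates_max_general
    (Ω : Type*) [MeasurableSpace Ω] (μ : Measure Ω)
    (Z : ℕ → ℕ → Ω → ℝ)
    (hmeas : ∀ i j, Measurable (Z i j))
    (C δ : ℝ) (hδ : 0 < δ)
    (hmom : ∀ i j, ∫⁻ ω, ENNReal.ofReal (|Z i j ω| ^ (4 + δ)) ∂μ ≤ ENNReal.ofReal C)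
    (K : ℝ)
    (p : ℕ → ℕ) (hp : ∀ n : ℕ, (p n : ℝ) ≤ K * n) :
    ∀ᵐ ω ∂μ, ∀ᶠ n : ℕ in atTop,
      ∀ i ∈ Finset.Icc 1 (p n), ∀ j ∈ Finset.Icc 1 n,
        |Z i j ω| ≤ (n : ℝ) ^ ((1 / 2 : ℝ) * (1 + δ / 8)⁻¹) := by
  obtain ⟨k, hk⟩ := exists_nat_ge K
  have hpk : ∀ n, p n ≤ k * n := fun n => by
    exact_mod_cast (hp n).trans (by gcongr : K * n ≤ k * n)
  set a : ℝ := (1 / 2 : ℝ) * (1 + δ / 8)⁻¹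
  have ha : 0 ≤ a := by positivity
  set box : ℕ → Finset (ℕ × ℕ) := fun ℓ =>
    Finset.Icc 1 (k * 2 ^ (ℓ + 1)) ×ˢ Finset.Icc 1 (2 ^ (ℓ + 1))
  set level : ℕ → ℝ := fun ℓ => ((2 ^ ℓ : ℕ) : ℝ) ^ a
  refine ae_eventually_of_tsum_ne_top_of_pow_blocks one_lt_two
    (fun ℓ => ⋃ ij ∈ box ℓ, {ω | level ℓ < |Z ij.1 ij.2 ω|}) ?_ ?_
  · have hblock : ∀ ℓ, μ (⋃ ij ∈ box ℓ, {ω | level ℓ < |Z ij.1 ij.2 ω|}) ≤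
        4 * k * ENNReal.ofReal C * (4 ^ ℓ / ENNReal.ofReal (2 ^ (a * (4 + δ))) ^ ℓ) := fun ℓ => by
      refine (measure_biUnion_lt_abs_le_card_mul (fun ij => (hmeas ij.1 ij.2).aemeasurable)
        (by positivity) (by positivity : 0 < level ℓ) (fun ij => hmom ij.1 ij.2)
        (box ℓ)).trans_eq ?_
      rw [← ENNReal.natCast_mul_two_pow_mul_two_pow_mul_div,
        ← ENNReal.ofReal_pow (by positivity), ← Real.pow_rpow_rpow_eq_rpow_mul_pow zero_le_two]
      simp [box, level]
    exact ne_top_of_le_ne_top (ENNReal.tsum_mul_div_pow_ne_top (by finiteness)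
      (ENNReal.four_lt_ofReal_two_rpow (two_lt_truncationExponent_mul hδ)))
      (ENNReal.tsum_le_tsum hblock)
  · intro ℓ ω hω n hn hn_lt i hi j hj
    simp only [Finset.mem_Icc] at hi hj
    have hij : (i, j) ∈ box ℓ := by
      simp only [box, Finset.mem_product, Finset.mem_Icc]
      exact ⟨⟨hi.1, (hi.2.trans (hpk n)).trans (Nat.mul_le_mul_left k hn_lt.le)⟩,
        ⟨hj.1, hj.2.trans hn_lt.le⟩⟩
    calc |Z i j ω| ≤ level ℓ := not_lt.1 fun h => hω (Set.mem_biUnion hij h)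
      _ ≤ (n : ℝ) ^ a := Real.rpow_le_rpow (by positivity) (by exact_mod_cast hn) ha

/-- for an infinite array of independent random variables `Z_{i,j}` with
uniformly bounded `(4+δ)`-th absolute moments, and `p_n ≤ K n`, almost surely the maximum
`M(n) = max_{1 ≤ i ≤ p_n, 1 ≤ j ≤ n} |Z_{i,j}|` satisfies `M(n) ≤ B_n` for all
sufficiently large `n`, where `B_n = n^{(1/2)(1+δ/8)⁻¹}`. -/
theorem truncation_level_eventually_dominates_max
    (Ω : Type*) [MeasurableSpace Ω] (μ : Measure Ω) [IsProbabilityMeasure μ]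
    (Z : ℕ → ℕ → Ω → ℝ)
    (hmeas : ∀ i j, Measurable (Z i j))
    (hIndep : ProbabilityTheory.iIndepFun
      (fun ij : ℕ × ℕ => Z ij.1 ij.2) μ)
    (C δ : ℝ) (hC : 0 < C) (hδ : 0 < δ)
    (hmom : ∀ i j, ∫⁻ ω, ENNReal.ofReal (|Z i j ω| ^ (4 + δ)) ∂μ ≤ ENNReal.ofReal C)
    (K : ℝ) (hK : 0 < K)
    (p : ℕ → ℕ) (hp : ∀ n : ℕ, (p n : ℝ) ≤ K * n) :
    ∀ᵐ ω ∂μ, ∀ᶠ n : ℕ in atTop,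
      ∀ i ∈ Finset.Icc 1 (p n), ∀ j ∈ Finset.Icc 1 n,
        |Z i j ω| ≤ (n : ℝ) ^ ((1 / 2 : ℝ) * (1 + δ / 8)⁻¹) :=
  truncation_level_eventually_dominates_max_general Ω μ Z hmeas C δ hδ hmom K p hp
end
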